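/- arXiv:1506.01814 — 2 statements merged into one kernel-verified Lean document; each statement's English description precedes it below -/
import Mathlib

section
/- Let D be an integral domain of characteristic 0, ℓ an odd prime, and g ∈ SL₂(D) an element of order exactly ℓ. Then the centralizer of g in SL₂(D) is a subgroup of index at most 2 in the normalizer of the cyclic subgroup ⟨g⟩ in SL₂(D). -/
/-! Conjugation by an element `x` of the normalizer sends `g` to a power `h = g ^ k` with the same
trace. In `SL₂` Cayley–Hamilton reads `M + M⁻¹ = tr M • 1`, so for the commuting pair `h, g` the
product `(h - g) (1 - (h g)⁻¹)` vanishes; taking determinants over a domain gives `tr (h g⁻¹) = 2`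
or `tr (h g) = 2`. Over a ring without additive torsion, a finite-order `M ∈ SL₂` of trace `2` is
trivial, since `(M - 1)² = 0` gives `Mⁿ = 1 + n (M - 1)`. Hence `h = g` or `h = g⁻¹`, and two
elements of the normalizer outside the centralizer differ by an element of the centralizer. -/

open Matrix Subgroup
open scoped MatrixGroups

theorem one_add_pow_of_mul_self_eq_zero {M : Type*} [Ring M] {N : M} (hN : N * N = 0) (n : ℕ) :
    (1 + N) ^ n = 1 + n • N := by
  induction n with
  | zero => simp
  | succ n ih =>
    rw [pow_succ, ih, mul_add, mul_one, add_mul, one_mul, smul_mul_assoc, hN, smul_zero, succ_nsmul]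
    abel

namespace Subgroup

variable {G : Type*} [Group G]

theorem centralizer_le_normalizer_zpowers (g : G) :
    centralizer {g} ≤ normalizer (zpowers g : Set G) := by
  simpa only [zpowers_eq_closure, centralizer_closure] using
    centralizer_le_normalizer (zpowers g : Set G)

theorem relIndex_centralizer_eq_one_or_two {g : G} {K : Subgroup G}
    (hK : ∀ x ∈ K, x * g * x⁻¹ = g ∨ x * g * x⁻¹ = g⁻¹) :
    (centralizer {g}).relIndex K = 1 ∨ (centralizer {g}).relIndex K = 2 := by
  have hmem : ∀ x, x ∈ centralizer {g} ↔ x * g * x⁻¹ = g := fun x => by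
    rw [mem_centralizer_singleton_iff, mul_inv_eq_iff_eq_mul, eq_comm]
  by_cases hKC : K ≤ centralizer {g}
  · exact Or.inl (relIndex_eq_one.mpr hKC)
  obtain ⟨a, haK, haC⟩ := Set.not_subset.mp hKC
  have hga : a * g * a⁻¹ = g⁻¹ := (hK a haK).resolve_left ((hmem a).not.mp haC)
  have hg : g⁻¹ ≠ g := hga ▸ (hmem a).not.mp haC
  refine Or.inr (relIndex_eq_two_iff.mpr ⟨a, haK, fun b hbK => ?_⟩)
  have hconj : b * a * g * (b * a)⁻¹ = (b * g * b⁻¹)⁻¹ := by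
    rw [_root_.mul_inv_rev, mul_assoc b, mul_assoc b, ← mul_assoc (a * g), hga]
    group
  rw [hmem, hmem, hconj]
  rcases hK b hbK with h | h <;> simp [h, hg]

end Subgroup

namespace Matrix.SpecialLinearGroup

variable {R : Type*} [CommRing R]

local notation:1024 "↑ₘ" A:1024 => ((A : SL(2, R)) : Matrix (Fin 2) (Fin 2) R)

theorem coe_add_coe_inv (A : SL(2, R)) : ↑ₘA + ↑ₘA⁻¹ = trace ↑ₘA • 1 := by
  rw [coe_inv, adjugate_fin_two]
  ext i j
  fin_cases i <;> fin_cases j <;> simp [trace_fin_two]; ring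

theorem coe_mul_self (A : SL(2, R)) : ↑ₘA * ↑ₘA = trace ↑ₘA • ↑ₘA - 1 := by
  have hAA : ↑ₘA * ↑ₘA⁻¹ = 1 := by rw [← coe_mul, mul_inv_cancel, coe_one]
  calc ↑ₘA * ↑ₘA = ↑ₘA * (↑ₘA + ↑ₘA⁻¹) - ↑ₘA * ↑ₘA⁻¹ := by rw [mul_add, add_sub_cancel_right]
    _ = trace ↑ₘA • ↑ₘA - 1 := by rw [coe_add_coe_inv, hAA, mul_smul_comm, mul_one]

theorem det_coe_sub_one (A : SL(2, R)) : det (↑ₘA - 1) = 2 - trace ↑ₘA := by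
  have hA := A.det_coe
  rw [det_fin_two] at hA ⊢
  simp only [sub_apply, one_apply_eq, one_apply_ne zero_ne_one, one_apply_ne one_ne_zero,
    trace_fin_two]
  linear_combination hA

theorem eq_one_of_trace_eq_two [IsAddTorsionFree R] {A : SL(2, R)} (hA : IsOfFinOrder A)
    (htr : trace ↑ₘA = 2) : A = 1 := by
  obtain ⟨n, hn, hAn⟩ := isOfFinOrder_iff_pow_eq_one.mp hA
  set N := ↑ₘA - 1
  have hN : N * N = 0 := by
    have hA2 := coe_mul_self A
    rw [htr, two_smul] at hA2
    simp only [N, sub_mul, mul_sub, hA2, one_mul, mul_one]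
    abel
  have hnN : n • N = 0 := by
    have := congrArg ((↑) : SL(2, R) → Matrix (Fin 2) (Fin 2) R) hAn
    rwa [coe_pow, coe_one, ← add_sub_cancel (1 : Matrix (Fin 2) (Fin 2) R) ↑ₘA,
      one_add_pow_of_mul_self_eq_zero hN, add_eq_left] at this
  have hN0 : N = 0 := by
    ext i j
    exact (smul_eq_zero.mp (congrFun (congrFun hnN i) j)).resolve_left hn.ne'
  exact Subtype.ext (sub_eq_zero.mp hN0)

theorem trace_mul_inv_eq_two_or_trace_mul_eq_two [IsDomain R] {A B : SL(2, R)}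
    (hAB : Commute A B) (htr : trace ↑ₘA = trace ↑ₘB) :
    trace ↑ₘ(A * B⁻¹) = 2 ∨ trace ↑ₘ(A * B) = 2 := by
  have hA : A * (A * B)⁻¹ = B⁻¹ := by rw [hAB.eq, _root_.mul_inv_rev, mul_inv_cancel_left]
  have hB : B * (A * B)⁻¹ = A⁻¹ := by rw [_root_.mul_inv_rev, mul_inv_cancel_left]
  have hprod : (↑ₘA - ↑ₘB) * (1 - ↑ₘ(A * B)⁻¹) = 0 := by
    rw [mul_sub, mul_one, sub_mul, ← coe_mul, ← coe_mul, hA, hB, sub_eq_zero,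
      sub_eq_sub_iff_add_eq_add, add_comm ↑ₘB⁻¹, coe_add_coe_inv, coe_add_coe_inv, htr]
  have hleft : ↑ₘA - ↑ₘB = (↑ₘ(A * B⁻¹) - 1) * ↑ₘB := by
    rw [sub_mul, one_mul, ← coe_mul, inv_mul_cancel_right]
  have hright : 1 - ↑ₘ(A * B)⁻¹ = ↑ₘ(A * B)⁻¹ * (↑ₘ(A * B) - 1) := by
    rw [mul_sub, mul_one, ← coe_mul, inv_mul_cancel, coe_one]
  have hdet := congrArg det hprod
  rw [hleft, hright, det_mul, det_mul, det_mul, det_coe, det_coe, mul_one, one_mul, det_zero,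
    det_coe_sub_one, det_coe_sub_one, mul_eq_zero, sub_eq_zero, sub_eq_zero] at hdet
  exact hdet.imp Eq.symm Eq.symm

theorem conj_eq_or_conj_eq_inv_of_mem_normalizer [IsDomain R] [CharZero R] {g x : SL(2, R)}
    (hg : IsOfFinOrder g) (hx : x ∈ normalizer (zpowers g : Set SL(2, R))) :
    x * g * x⁻¹ = g ∨ x * g * x⁻¹ = g⁻¹ := by
  obtain ⟨k, hk⟩ : x * g * x⁻¹ ∈ zpowers g :=
    (mem_normalizer_iff.mp hx g).mp (mem_zpowers g)
  have hk : g ^ k = x * g * x⁻¹ := hk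
  have htr : trace ↑ₘ(x * g * x⁻¹) = trace ↑ₘg := by
    rw [coe_mul, coe_mul, trace_mul_cycle, ← coe_mul, ← coe_mul, inv_mul_cancel, one_mul]
  have hcomm : Commute (x * g * x⁻¹) g := hk ▸ (Commute.refl g).zpow_left k
  rcases trace_mul_inv_eq_two_or_trace_mul_eq_two hcomm htr with h | h
  · refine Or.inl (mul_inv_eq_one.mp (eq_one_of_trace_eq_two ?_ h))
    rw [← hk, ← _root_.zpow_sub_one]
    exact hg.zpow
  · refine Or.inr (eq_inv_of_mul_eq_one_left (eq_one_of_trace_eq_two ?_ h))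
    rw [← hk, ← _root_.zpow_add_one]
    exact hg.zpow

end Matrix.SpecialLinearGroup

theorem centralizer_relindex_normalizer_le_two_general
    (D : Type*) [CommRing D] [IsDomain D] [CharZero D]
    (ℓ : ℕ) (hℓ : ℓ.Prime)
    (g : Matrix.SpecialLinearGroup (Fin 2) D) (hg : orderOf g = ℓ) :
    Subgroup.centralizer {g} ≤ Subgroup.normalizer (Subgroup.zpowers g : Set (Matrix.SpecialLinearGroup (Fin 2) D)) ∧
      ((Subgroup.centralizer {g}).relIndex (Subgroup.normalizer (Subgroup.zpowers g : Set (Matrix.SpecialLinearGroup (Fin 2) D))) = 1 ∨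
        (Subgroup.centralizer {g}).relIndex (Subgroup.normalizer (Subgroup.zpowers g : Set (Matrix.SpecialLinearGroup (Fin 2) D))) = 2) := by
  have hg_fin : IsOfFinOrder g := orderOf_pos_iff.mp (hg ▸ hℓ.pos)
  exact ⟨centralizer_le_normalizer_zpowers g, relIndex_centralizer_eq_one_or_two
    fun _ hx => Matrix.SpecialLinearGroup.conj_eq_or_conj_eq_inv_of_mem_normalizer hg_fin hx⟩

/-- Let `D` be an integral domain of characteristic `0`, `ℓ` an odd prime,
and `g ∈ SL₂(D)` of order exactly `ℓ`.  Then the centralizer of `g` in `SL₂(D)` is a subgroup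
of index at most `2` (i.e. of index `1` or `2`) in the normalizer of the cyclic subgroup
`⟨g⟩`. -/
theorem centralizer_relindex_normalizer_le_two
    (D : Type*) [CommRing D] [IsDomain D] [CharZero D]
    (ℓ : ℕ) (hℓ : ℓ.Prime) (hℓodd : Odd ℓ)
    (g : Matrix.SpecialLinearGroup (Fin 2) D) (hg : orderOf g = ℓ) :
    Subgroup.centralizer {g} ≤ Subgroup.normalizer (Subgroup.zpowers g : Set (Matrix.SpecialLinearGroup (Fin 2) D)) ∧
      ((Subgroup.centralizer {g}).relIndex (Subgroup.normalizer (Subgroup.zpowers g : Set (Matrix.SpecialLinearGroup (Fin 2) D))) = 1 ∨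
        (Subgroup.centralizer {g}).relIndex (Subgroup.normalizer (Subgroup.zpowers g : Set (Matrix.SpecialLinearGroup (Fin 2) D))) = 2) :=
  centralizer_relindex_normalizer_le_two_general D ℓ hℓ g hg
end

section
/- Let F be a field of characteristic 0 and ℓ an odd prime. Then every elementary abelian ℓ-subgroup of SL₂(F), i.e. every commutative subgroup E ≤ SL₂(F) in which every element g satisfies g^ℓ = 1, is cyclic; in particular such a subgroup has cardinality 1 or ℓ. -/
/-!
Pass to an algebraic closure. A nontrivial `a ∈ E` is not scalar, since a scalar of determinant
`1` and odd order is `1`; so its eigenspaces are lines, and an eigenvector `w` of `a` is an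
eigenvector of every `b ∈ E`. An element of `SL₂` of order dividing `ℓ` that fixes `w` is
unipotent, hence trivial because `ℓ ≠ 0`. Hence the eigenvalue `μ` of `a` on `w` is a primitive
`ℓ`-th root of unity, the eigenvalue of `b` is `μ ^ (-i)` for some `i`, and `b * a ^ i` fixes `w`,
so `b = a ^ (-i)`: the group `E` is generated by `a`.
-/

open Module Matrix
open scoped MatrixGroups

theorem Submodule.eq_span_singleton_of_finrank_eq_two {K V : Type*} [Field K] [AddCommGroup V]
    [Module K V] (hV : finrank K V = 2) {S : Submodule K V} (hS : S ≠ ⊤) {w : V} (hw : w ∈ S)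
    (hw0 : w ≠ 0) : S = K ∙ w := by
  have : FiniteDimensional K V := .of_finrank_eq_succ hV
  have hlt : finrank K S < 2 := hV ▸ Submodule.finrank_lt hS
  have hpos : finrank K S ≠ 0 := fun h ↦ hw0 <| by
    rw [Submodule.finrank_eq_zero] at h
    simpa [h] using hw
  exact eq_span_singleton_of_mem_of_finrank_eq_one (by omega) hw hw0

namespace Module.End

theorem HasEigenvector.pow_eq_one {R M : Type*} [CommRing R] [IsDomain R] [AddCommGroup M]
    [Module R M] [IsTorsionFree R M] {f : End R M} {μ : R} {v : M} (hv : f.HasEigenvector μ v)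
    {n : ℕ} (hf : f ^ n = 1) : μ ^ n = 1 :=
  smul_left_injective R hv.2 <| by simpa [hf] using (hv.pow_apply n).symm

theorem HasEigenvector.exists_apply_eq_smul_of_commute {K V : Type*} [Field K] [AddCommGroup V]
    [Module K V] (hV : finrank K V = 2) {f g : End K V} (hfg : Commute f g) {μ : K} {v : V}
    (hv : f.HasEigenvector μ v) (hμ : f.eigenspace μ ≠ ⊤) : ∃ c : K, g v = c • v := by
  have hgv : g v ∈ f.eigenspace μ := mapsTo_genEigenspace_of_comm hfg μ 1 hv.1
  rw [Submodule.eq_span_singleton_of_finrank_eq_two hV hμ hv.1 hv.2] at hgv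
  obtain ⟨c, hc⟩ := Submodule.mem_span_singleton.mp hgv
  exact ⟨c, hc.symm⟩

end Module.End

theorem Matrix.sub_one_sq_eq_zero_of_det_eq_one {R : Type*} [CommRing R]
    {A : Matrix (Fin 2) (Fin 2) R} (hA : A.det = 1) (h : (A - 1).det = 0) :
    (A - 1) ^ 2 = 0 := by
  rw [det_fin_two] at hA h
  ext i j
  fin_cases i <;> fin_cases j <;>
    simp only [sq, mul_apply, Matrix.sub_apply, Matrix.zero_apply, Fin.sum_univ_two, one_apply_eq,
      one_apply_ne, ne_eq, zero_ne_one, one_ne_zero, not_false_eq_true, sub_zero, Fin.isValue,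
      Fin.zero_eta, Fin.mk_one] at h ⊢ <;>
    grind

theorem one_add_pow_of_sq_eq_zero {R : Type*} [Ring R] {N : R} (hN : N ^ 2 = 0) (n : ℕ) :
    (1 + N) ^ n = 1 + n * N := by
  induction n with
  | zero => simp
  | succ n ih =>
    calc (1 + N) ^ (n + 1) = 1 + (n + 1) * N + n * N ^ 2 := by rw [pow_succ, ih]; noncomm_ring
      _ = 1 + (n + 1 : ℕ) * N := by rw [hN]; push_cast; noncomm_ring

namespace Matrix.SpecialLinearGroup

theorem map_injective {R S n : Type*} [CommRing R] [CommRing S] [Fintype n] [DecidableEq n]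
    {f : R →+* S} (hf : Function.Injective f) :
    Function.Injective (map f : SpecialLinearGroup n R →* SpecialLinearGroup n S) :=
  fun _ _ h ↦ Subtype.ext <| Matrix.map_injective hf <| congrArg Subtype.val h

variable {K : Type*} [Field K] {ℓ : ℕ}

theorem eq_one_of_mulVec_eq_self (hℓ : (ℓ : K) ≠ 0) {g : SL(2, K)} (hg : g ^ ℓ = 1)
    {w : Fin 2 → K} (hw : w ≠ 0) (hgw : (g : Matrix (Fin 2) (Fin 2) K) *ᵥ w = w) : g = 1 := by
  set N := (g : Matrix (Fin 2) (Fin 2) K) - 1 with hN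
  have hdet : N.det = 0 := exists_mulVec_eq_zero_iff.mp ⟨w, hw, by simp [N, sub_mulVec, hgw]⟩
  have hsq : N ^ 2 = 0 := sub_one_sq_eq_zero_of_det_eq_one g.2 hdet
  have hℓN : (ℓ : Matrix (Fin 2) (Fin 2) K) * N = 0 := by
    have := one_add_pow_of_sq_eq_zero hsq ℓ
    rwa [hN, add_sub_cancel, ← coe_pow, hg, coe_one, left_eq_add] at this
  have hN0 : N = 0 := by
    rw [← nsmul_eq_mul, ← Nat.cast_smul_eq_nsmul K] at hℓN
    exact (smul_eq_zero.mp hℓN).resolve_left hℓ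
  exact Subtype.ext (sub_eq_zero.mp hN0)

theorem eq_one_of_coe_eq_smul_one (hodd : Odd ℓ) {g : SL(2, K)} (hg : g ^ ℓ = 1) {μ : K}
    (hμ : (g : Matrix (Fin 2) (Fin 2) K) = μ • 1) : g = 1 := by
  have hμ2 : μ ^ 2 = 1 := by simpa [hμ, det_smul] using g.2
  have hμℓ : μ ^ ℓ = 1 := by
    have := congrArg (fun g : SL(2, K) ↦ (g : Matrix (Fin 2) (Fin 2) K) 0 0) hg
    simpa [coe_pow, hμ, smul_pow] using this
  obtain ⟨m, rfl⟩ := hodd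
  have hμ1 : μ = 1 := by rwa [pow_succ, pow_mul, hμ2, one_pow, one_mul] at hμℓ
  ext1
  rw [hμ, hμ1, one_smul, coe_one]

theorem mem_zpowers_of_commute_of_isAlgClosed [IsAlgClosed K] (hℓ : ℓ.Prime) (hodd : Odd ℓ)
    (hℓK : (ℓ : K) ≠ 0) {a b : SL(2, K)} (hab : Commute a b) (ha : a ^ ℓ = 1)
    (hb : b ^ ℓ = 1) (ha1 : a ≠ 1) : b ∈ Subgroup.zpowers a := by
  have : Fact ℓ.Prime := ⟨hℓ⟩
  let ρ : SL(2, K) →* End K (Fin 2 → K) :=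
    LinearEquiv.automorphismGroup.toLinearMapMonoidHom.comp toLin'
  have hfix (g : SL(2, K)) (hg : g ^ ℓ = 1) {v : Fin 2 → K} (hv : v ≠ 0) (hgv : ρ g v = v) :
      g = 1 :=
    eq_one_of_mulVec_eq_self hℓK hg hv hgv
  obtain ⟨μ, hμ⟩ := End.exists_eigenvalue (ρ a)
  obtain ⟨w, hw⟩ := hμ.exists_hasEigenvector
  have hline : (ρ a).eigenspace μ ≠ ⊤ := by
    intro htop
    refine ha1 (eq_one_of_coe_eq_smul_one hodd ha (μ := μ) ?_)
    rw [End.eigenspace_def, LinearMap.ker_eq_top, sub_eq_zero] at htop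
    exact Matrix.toLin'.injective (by rw [map_smul, toLin'_one]; exact htop)
  have hμℓ : μ ^ ℓ = 1 := hw.pow_eq_one (by rw [← map_pow, ha, map_one])
  have hμ1 : μ ≠ 1 := fun h ↦ ha1 (hfix a ha hw.2 (by rw [hw.apply_eq_smul, h, one_smul]))
  have hprim : IsPrimitiveRoot μ ℓ := IsPrimitiveRoot.iff_orderOf.mpr (orderOf_eq_prime hμℓ hμ1)
  obtain ⟨c, hc⟩ := hw.exists_apply_eq_smul_of_commute (finrank_fin_fun K) (hab.map ρ) hline
  have hcℓ : c ^ ℓ = 1 :=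
    End.HasEigenvector.pow_eq_one (f := ρ b) ⟨End.mem_eigenspace_iff.mpr hc, hw.2⟩
      (by rw [← map_pow, hb, map_one])
  have hc0 : c ≠ 0 := by rintro rfl; simp [hℓ.ne_zero] at hcℓ
  obtain ⟨i, -, hi⟩ := hprim.eq_pow_of_pow_eq_one (ξ := c⁻¹) (by rw [inv_pow, hcℓ, inv_one])
  have hbai : b * a ^ i = 1 := by
    refine hfix _ ?_ hw.2 ?_
    · rw [(hab.symm.pow_right i).mul_pow, ← pow_mul, mul_comm, pow_mul, ha, hb, one_pow, one_mul]
    · rw [map_mul, map_pow, End.mul_apply, hw.pow_apply, map_smul, hc, smul_smul, hi,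
        inv_mul_cancel₀ hc0, one_smul]
  rw [eq_inv_of_mul_eq_one_left hbai]
  exact inv_mem (pow_mem (Subgroup.mem_zpowers a) i)

theorem mem_zpowers_of_commute (hℓ : ℓ.Prime) (hodd : Odd ℓ) (hℓK : (ℓ : K) ≠ 0)
    {a b : SL(2, K)} (hab : Commute a b) (ha : a ^ ℓ = 1) (hb : b ^ ℓ = 1) (ha1 : a ≠ 1) :
    b ∈ Subgroup.zpowers a := by
  let φ := map (n := Fin 2) (algebraMap K (AlgebraicClosure K))
  have hφ : Function.Injective φ := map_injective (algebraMap K _).injective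
  have hφb : φ b ∈ Subgroup.zpowers (φ a) :=
    mem_zpowers_of_commute_of_isAlgClosed hℓ hodd
      (by rwa [← map_natCast (algebraMap K _), map_ne_zero]) (hab.map φ)
      (by rw [← map_pow, ha, map_one]) (by rw [← map_pow, hb, map_one])
      (fun h ↦ ha1 (hφ (by rw [h, map_one])))
  rwa [← MonoidHom.map_zpowers, Subgroup.mem_map_iff_mem hφ] at hφb

end Matrix.SpecialLinearGroup

/-- Let `F` be a field of characteristic `0` and `ℓ` an odd prime.  Every
elementary abelian `ℓ`-subgroup of `SL₂(F)`, i.e. every commutative subgroup in which every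
element `g` satisfies `g ^ ℓ = 1`, is cyclic; in particular it has cardinality `1` or `ℓ`. -/
theorem elementaryAbelian_subgroup_sl2_isCyclic
    (F : Type*) [Field F] [CharZero F] (ℓ : ℕ) (hℓ : ℓ.Prime) (hℓodd : Odd ℓ)
    (E : Subgroup (Matrix.SpecialLinearGroup (Fin 2) F))
    (hcomm : ∀ x ∈ E, ∀ y ∈ E, x * y = y * x)
    (hexp : ∀ x ∈ E, x ^ ℓ = 1) :
    IsCyclic E ∧ (Nat.card E = 1 ∨ Nat.card E = ℓ) := by
  obtain rfl | ⟨a, ha, ha1⟩ := E.bot_or_exists_ne_one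
  · exact ⟨inferInstance, .inl Subgroup.card_bot⟩
  have hE : E = Subgroup.zpowers a := le_antisymm
    (fun b hb ↦ SpecialLinearGroup.mem_zpowers_of_commute hℓ hℓodd
      (Nat.cast_ne_zero.mpr hℓ.ne_zero) (hcomm a ha b hb) (hexp a ha) (hexp b hb) ha1)
    (Subgroup.zpowers_le.mpr ha)
  subst hE
  have : Fact ℓ.Prime := ⟨hℓ⟩
  exact ⟨inferInstance, .inr (by rw [Nat.card_zpowers, orderOf_eq_prime (hexp a ha) ha1])⟩
end
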